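/- arXiv:1705.00785 — 9 statements merged into one kernel-verified Lean document; each statement's English description precedes it below -/
import Mathlib

section
/- (Theorem 1) Let {K_n} be a finite family of incoherent 2×2 complex matrices with ∑_n K_n† K_n = I, and let z, r be real numbers with z² + r² ≤ 1. Then there exists a finite family {K'_m} of strictly incoherent 2×2 complex matrices with ∑_m K'_m† K'_m = I such that ∑_m K'_m ρ(z,r) K'_m† = ∑_n K_n ρ(z,r) K_n†. In particular, the set of qubit states reachable from ρ(z,r) by incoherent operations equals the set reachable by strictly incoherent operations. -/
open Matrix

/-- A 2×2 complex matrix is incoherent if each of its columns has at most one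
nonzero entry. -/
def Incoherent (K : Matrix (Fin 2) (Fin 2) ℂ) : Prop :=
  ∀ j i i' : Fin 2, K i j ≠ 0 → K i' j ≠ 0 → i = i'

/-- A 2×2 complex matrix is strictly incoherent if each of its columns and each of
its rows has at most one nonzero entry. -/
def StrictlyIncoherent (K : Matrix (Fin 2) (Fin 2) ℂ) : Prop :=
  Incoherent K ∧ ∀ i j j' : Fin 2, K i j ≠ 0 → K i j' ≠ 0 → j = j'

/-- The qubit state `ρ(z,r) = (1/2) [[1+z, r], [r, 1-z]]`. -/
noncomputable def qubit (z r : ℝ) : Matrix (Fin 2) (Fin 2) ℂ :=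
  (1 / 2 : ℂ) • !![1 + (z : ℂ), (r : ℂ); (r : ℂ), 1 - (z : ℂ)]

/-- `σ` is reachable from `ρ` by an incoherent operation. -/
def IOReachable (ρ σ : Matrix (Fin 2) (Fin 2) ℂ) : Prop :=
  ∃ (n : ℕ) (K : Fin n → Matrix (Fin 2) (Fin 2) ℂ),
    (∀ i, Incoherent (K i)) ∧ (∑ i, (K i)ᴴ * K i = 1) ∧ (∑ i, K i * ρ * (K i)ᴴ = σ)

/-- `σ` is reachable from `ρ` by a strictly incoherent operation. -/
def SIOReachable (ρ σ : Matrix (Fin 2) (Fin 2) ℂ) : Prop :=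
  ∃ (n : ℕ) (K : Fin n → Matrix (Fin 2) (Fin 2) ℂ),
    (∀ i, StrictlyIncoherent (K i)) ∧ (∑ i, (K i)ᴴ * K i = 1) ∧
      (∑ i, K i * ρ * (K i)ᴴ = σ)

/-! An incoherent qubit Kraus operator that is not strictly incoherent has a zero row, so it
sends every state to a diagonal one. Splitting an incoherent operation into its strictly
incoherent part and the rest, the rest has diagonal `T = ∑ KᴴK = 1 - ∑_SIO KᴴK` and diagonal
output `P = ∑ KρKᴴ` with `tr P = tr (Tρ)`. Writing `T = diag m` and `P = (tr P) diag t`, the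
strictly incoherent measure-and-prepare operators `√(tᵢ mⱼ) |i⟩⟨j|` reproduce both `T` and `P`. -/

open scoped ComplexOrder

lemma exists_eq_mul_sum_of_nonneg {d : Type*} [Fintype d] [Nonempty d] {p : d → ℝ}
    (hp : 0 ≤ p) : ∃ t : d → ℝ, 0 ≤ t ∧ ∑ i, t i = 1 ∧ ∀ i, p i = t i * ∑ j, p j := by
  by_cases hs : ∑ j, p j = 0
  · have hp0 : p = 0 := (Fintype.sum_eq_zero_iff_of_nonneg hp).mp hs
    exact ⟨fun _ => (Fintype.card d : ℝ)⁻¹, fun _ => by positivity, by simp, fun _ => by simp [hp0]⟩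
  · refine ⟨fun i => p i / ∑ j, p j, fun i => div_nonneg (hp i) (Finset.sum_nonneg fun j _ => hp j),
      by rw [← Finset.sum_div, div_self hs], fun _ => (div_mul_cancel₀ _ hs).symm⟩

lemma Matrix.PosSemidef.exists_eq_diagonal_ofReal {d : Type*} [DecidableEq d]
    {A : Matrix d d ℂ} (hA : A.PosSemidef) (hd : A.IsDiag) :
    ∃ m : d → ℝ, 0 ≤ m ∧ A = diagonal fun i => (m i : ℂ) :=
  ⟨fun i => (A i i).re, fun i => (Complex.nonneg_iff.mp hA.diag_nonneg).1, by
    conv_lhs => rw [← hd.diagonal_diag]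
    exact congrArg diagonal (funext fun i =>
      Complex.eq_re_of_ofReal_le (r := 0) (by exact_mod_cast hA.diag_nonneg))⟩

section SingleEntryKraus

variable {d : Type*} [Fintype d] [DecidableEq d]

lemma sum_sum_single_eq_diagonal (f : d → d → ℂ) :
    ∑ i, ∑ j, single i i (f i j) = diagonal fun i => ∑ j, f i j := by
  rw [← sum_single_eq_diagonal]
  exact Finset.sum_congr rfl fun i _ => (map_sum (singleAddMonoidHom (α := ℂ) i i) _ _).symm

lemma sum_conjTranspose_single_mul_single (a : d → d → ℂ) :
    ∑ x : d × d, (single x.1 x.2 (a x.1 x.2))ᴴ * single x.1 x.2 (a x.1 x.2) =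
      diagonal fun j => ∑ i, star (a i j) * a i j := by
  simp only [conjTranspose_single, single_mul_single_same, Fintype.sum_prod_type]
  rw [Finset.sum_comm, sum_sum_single_eq_diagonal]

lemma sum_single_mul_mul_conjTranspose (a : d → d → ℂ) (ρ : Matrix d d ℂ) :
    ∑ x : d × d, single x.1 x.2 (a x.1 x.2) * ρ * (single x.1 x.2 (a x.1 x.2))ᴴ =
      diagonal fun i => ∑ j, a i j * ρ j j * star (a i j) := by
  simp only [conjTranspose_single, single_mul_mul_single, Fintype.sum_prod_type]
  rw [sum_sum_single_eq_diagonal]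

theorem exists_single_kraus_of_isDiag [Nonempty d] {ρ T P : Matrix d d ℂ} (hT : T.PosSemidef)
    (hTd : T.IsDiag) (hP : P.PosSemidef) (hPd : P.IsDiag) (htr : P.trace = (T * ρ).trace) :
    ∃ a : d → d → ℂ,
      ∑ x : d × d, (single x.1 x.2 (a x.1 x.2))ᴴ * single x.1 x.2 (a x.1 x.2) = T ∧
      ∑ x : d × d, single x.1 x.2 (a x.1 x.2) * ρ * (single x.1 x.2 (a x.1 x.2))ᴴ = P := by
  obtain ⟨m, hm, rfl⟩ := hT.exists_eq_diagonal_ofReal hTd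
  obtain ⟨p, hp, rfl⟩ := hP.exists_eq_diagonal_ofReal hPd
  obtain ⟨t, ht, ht1, hpt⟩ := exists_eq_mul_sum_of_nonneg hp
  set a : d → d → ℂ := fun i j => (√(t i * m j) : ℝ)
  have hsq : ∀ i j, star (a i j) * a i j = t i * m j := fun i j => by
    rw [Complex.star_def, Complex.conj_ofReal, ← Complex.ofReal_mul,
      Real.mul_self_sqrt (mul_nonneg (ht i) (hm j)), Complex.ofReal_mul]
  have htr' : ∑ j, (p j : ℂ) = ∑ j, m j * ρ j j := by
    simpa [trace, diagonal_mul] using htr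
  refine ⟨a, (sum_conjTranspose_single_mul_single a).trans ?_,
    (sum_single_mul_mul_conjTranspose a ρ).trans ?_⟩
  · simp_rw [hsq, ← Finset.sum_mul]
    exact_mod_cast congrArg diagonal (funext fun j => by rw [ht1, one_mul])
  · refine congrArg diagonal (funext fun i => ?_)
    calc ∑ j, a i j * ρ j j * star (a i j)
        = t i * ∑ j, m j * ρ j j := by
          rw [Finset.mul_sum]
          exact Finset.sum_congr rfl fun j _ => by linear_combination ρ j j * hsq i j
      _ = p i := by rw [← htr', hpt i]; push_cast; rfl

end SingleEntryKraus

lemma strictlyIncoherent_single (i j : Fin 2) (c : ℂ) : StrictlyIncoherent (single i j c) := by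
  refine ⟨fun k i₁ i₂ h₁ h₂ => ?_, fun k j₁ j₂ h₁ h₂ => ?_⟩
  all_goals
    simp only [single_apply, ne_eq, ite_eq_right_iff, not_forall] at h₁ h₂
  exacts [h₁.1.1.symm.trans h₂.1.1, h₁.1.2.symm.trans h₂.1.2]

lemma StrictlyIncoherent.isDiag_conjTranspose_mul_self {K : Matrix (Fin 2) (Fin 2) ℂ}
    (hK : StrictlyIncoherent K) : (Kᴴ * K).IsDiag := fun a b hab => by
  simp only [mul_apply, conjTranspose_apply]
  refine Finset.sum_eq_zero fun k _ => ?_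
  by_contra h
  obtain ⟨ha, hb⟩ := mul_ne_zero_iff.mp h
  exact hab (hK.2 k a b (star_ne_zero.mp ha) hb)

lemma Incoherent.exists_row_eq_zero_of_not_strictlyIncoherent {K : Matrix (Fin 2) (Fin 2) ℂ}
    (hK : Incoherent K) (hns : ¬ StrictlyIncoherent K) : ∃ i, K i = 0 := by
  simp only [StrictlyIncoherent, not_and, not_forall] at hns
  obtain ⟨i, j, j', hj, hj', hjj'⟩ := hns hK
  have hcol : ∀ k, k = j ∨ k = j' := by omega
  refine ⟨i + 1, funext fun k => ?_⟩
  have hne : i + 1 ≠ i := by omega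
  by_contra hk
  rcases hcol k with rfl | rfl
  exacts [hne (hK _ _ _ hk hj), hne (hK _ _ _ hk hj')]

lemma isDiag_mul_mul_conjTranspose_of_row_eq_zero {K : Matrix (Fin 2) (Fin 2) ℂ} {i : Fin 2}
    (hi : K i = 0) (M : Matrix (Fin 2) (Fin 2) ℂ) : (K * M * Kᴴ).IsDiag := fun a b hab => by
  rcases (by omega : a = i ∨ b = i) with rfl | rfl
  · simp [mul_apply, hi]
  · simp [mul_apply, hi]

lemma qubit_posSemidef {z r : ℝ} (hzr : z ^ 2 + r ^ 2 ≤ 1) : (qubit z r).PosSemidef := by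
  -- Cayley–Hamilton for a Hermitian matrix of trace one: `ρ = ρ² + det ρ • 1`.
  have hCH : qubit z r = (qubit z r)ᴴ * qubit z r + ((1 - z ^ 2 - r ^ 2) / 4 : ℝ) • 1 := by
    ext i j
    fin_cases i <;> fin_cases j <;> simp [qubit, mul_apply, map_ofNat] <;> ring
  rw [hCH]
  exact (posSemidef_conjTranspose_mul_self _).add (PosSemidef.one.smul (by linarith))

lemma sioReachable_of_fintype {ι : Type*} [Fintype ι] {ρ σ : Matrix (Fin 2) (Fin 2) ℂ}
    (L : ι → Matrix (Fin 2) (Fin 2) ℂ) (hL : ∀ i, StrictlyIncoherent (L i))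
    (hsum : ∑ i, (L i)ᴴ * L i = 1) (hσ : ∑ i, L i * ρ * (L i)ᴴ = σ) : SIOReachable ρ σ :=
  let e := (Fintype.equivFin ι).symm
  ⟨Fintype.card ι, L ∘ e, fun _ => hL _, (e.sum_comp fun i => (L i)ᴴ * L i).trans hsum,
    (e.sum_comp fun i => L i * ρ * (L i)ᴴ).trans hσ⟩

lemma SIOReachable.ioReachable {ρ σ : Matrix (Fin 2) (Fin 2) ℂ} (h : SIOReachable ρ σ) :
    IOReachable ρ σ :=
  let ⟨n, K, hK, hsum, hσ⟩ := h
  ⟨n, K, fun i => (hK i).1, hsum, hσ⟩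

theorem sioReachable_of_add_isDiag {ι : Type*} [Fintype ι] {ρ σ T P : Matrix (Fin 2) (Fin 2) ℂ}
    (K : ι → Matrix (Fin 2) (Fin 2) ℂ) (hK : ∀ i, StrictlyIncoherent (K i))
    (hT : T.PosSemidef) (hTd : T.IsDiag) (hP : P.PosSemidef) (hPd : P.IsDiag)
    (htr : P.trace = (T * ρ).trace) (hsum : ∑ i, (K i)ᴴ * K i + T = 1)
    (hσ : ∑ i, K i * ρ * (K i)ᴴ + P = σ) : SIOReachable ρ σ := by
  obtain ⟨a, haT, haP⟩ := exists_single_kraus_of_isDiag hT hTd hP hPd htr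
  refine sioReachable_of_fintype
    (Sum.elim K fun x : Fin 2 × Fin 2 => single x.1 x.2 (a x.1 x.2)) ?_ ?_ ?_
  · rintro (i | x)
    exacts [hK i, strictlyIncoherent_single _ _ _]
  · simpa only [Fintype.sum_sum_type, Sum.elim_inl, Sum.elim_inr, haT] using hsum
  · simpa only [Fintype.sum_sum_type, Sum.elim_inl, Sum.elim_inr, haP] using hσ

theorem Matrix.PosSemidef.sioReachable_of_ioReachable {ρ σ : Matrix (Fin 2) (Fin 2) ℂ}
    (hρ : ρ.PosSemidef) (h : IOReachable ρ σ) : SIOReachable ρ σ := by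
  classical
  obtain ⟨n, K, hinc, hsum, rfl⟩ := h
  set good := Finset.univ.filter fun i => StrictlyIncoherent (K i)
  set bad := Finset.univ.filter fun i => ¬ StrictlyIncoherent (K i)
  set T := ∑ i ∈ bad, (K i)ᴴ * K i
  set P := ∑ i ∈ bad, K i * ρ * (K i)ᴴ
  have hGT : ∑ i ∈ good, (K i)ᴴ * K i + T = 1 :=
    (Finset.sum_filter_add_sum_filter_not _ _ _).trans hsum
  have hQP : ∑ i ∈ good, K i * ρ * (K i)ᴴ + P = ∑ i, K i * ρ * (K i)ᴴ :=
    Finset.sum_filter_add_sum_filter_not _ _ _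
  have hTd : T.IsDiag := by
    rw [eq_sub_of_add_eq' hGT]
    refine isDiag_one.sub (Finset.sum_induction _ IsDiag (fun _ _ => IsDiag.add) isDiag_zero ?_)
    exact fun i hi => (Finset.mem_filter.mp hi).2.isDiag_conjTranspose_mul_self
  have hPd : P.IsDiag := Finset.sum_induction _ IsDiag (fun _ _ => IsDiag.add) isDiag_zero
    fun i hi =>
      ((hinc i).exists_row_eq_zero_of_not_strictlyIncoherent (Finset.mem_filter.mp hi).2).elim
        fun _ h => isDiag_mul_mul_conjTranspose_of_row_eq_zero h ρ
  have htr : P.trace = (T * ρ).trace := by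
    simp only [P, T, trace_sum, Finset.sum_mul, trace_mul_cycle _ ρ]
  refine sioReachable_of_add_isDiag (fun i : {i // StrictlyIncoherent (K i)} => K i) (·.2)
    (posSemidef_sum _ fun i _ => posSemidef_conjTranspose_mul_self (K i)) hTd
    (posSemidef_sum _ fun i _ => hρ.mul_mul_conjTranspose_same (K i)) hPd htr ?_ ?_
  · rw [← hGT, Finset.sum_subtype good Finset.mem_filter_univ]
  · rw [← hQP, Finset.sum_subtype good Finset.mem_filter_univ]

/-- Theorem 1: every incoherent operation acting on a fixed qubit state can be
replaced by a strictly incoherent operation with the same output; consequently the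
IO- and SIO-transformation regions of any qubit state coincide. -/
theorem io_eq_sio_on_qubit (n : ℕ) (K : Fin n → Matrix (Fin 2) (Fin 2) ℂ)
    (hinc : ∀ i, Incoherent (K i)) (hsum : ∑ i, (K i)ᴴ * K i = 1)
    (z r : ℝ) (hzr : z ^ 2 + r ^ 2 ≤ 1) :
    (∃ (m : ℕ) (K' : Fin m → Matrix (Fin 2) (Fin 2) ℂ),
      (∀ i, StrictlyIncoherent (K' i)) ∧ (∑ i, (K' i)ᴴ * K' i = 1) ∧
      ∑ i, K' i * qubit z r * (K' i)ᴴ = ∑ i, K i * qubit z r * (K i)ᴴ) ∧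
    {σ | IOReachable (qubit z r) σ} = {σ | SIOReachable (qubit z r) σ} := by
  have hsio : ∀ σ, IOReachable (qubit z r) σ → SIOReachable (qubit z r) σ :=
    fun _ => (qubit_posSemidef hzr).sioReachable_of_ioReachable
  exact ⟨hsio _ ⟨n, K, hinc, hsum, rfl⟩, Set.ext fun σ => ⟨hsio σ, SIOReachable.ioReachable⟩⟩
end

section
/- Let z ∈ (−1, 1) and let s, t, h₁, h₂ be nonnegative real numbers satisfying h₁ + h₂ = s(1+z) + t(1−z). Then there exist nonnegative real numbers x₁, x₂, x₃, x₄ such that x₁ + x₃ = s, x₂ + x₄ = t, x₁(1+z) + x₄(1−z) = h₁, and x₁·x₂ = x₃·x₄. -/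
/-- Solvability of the system of equations arising in the proof of Theorem 1:
given `z ∈ (-1,1)` and nonnegative `s, t, h₁, h₂` with
`h₁ + h₂ = s(1+z) + t(1-z)`, there are nonnegative `x₁, x₂, x₃, x₄` with
`x₁ + x₃ = s`, `x₂ + x₄ = t`, `x₁(1+z) + x₄(1-z) = h₁` and `x₁ x₂ = x₃ x₄`. -/
theorem sio_replacement_system_solvable (z s t h₁ h₂ : ℝ)
    (hz : z ∈ Set.Ioo (-1 : ℝ) 1)
    (hs : 0 ≤ s) (ht : 0 ≤ t) (hh₁ : 0 ≤ h₁) (hh₂ : 0 ≤ h₂)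
    (hsum : h₁ + h₂ = s * (1 + z) + t * (1 - z)) :
    ∃ x₁ x₂ x₃ x₄ : ℝ, 0 ≤ x₁ ∧ 0 ≤ x₂ ∧ 0 ≤ x₃ ∧ 0 ≤ x₄ ∧
      x₁ + x₃ = s ∧ x₂ + x₄ = t ∧
      x₁ * (1 + z) + x₄ * (1 - z) = h₁ ∧ x₁ * x₂ = x₃ * x₄ := by
  rcases eq_or_lt_of_le (by positivity : (0:ℝ) ≤ h₁ + h₂) with hD | hD
  · -- h₁ + h₂ = 0
    have h1 : h₁ = 0 := by linarith [hh₁, hh₂]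
    refine ⟨0, t, s, 0, le_refl 0, ht, hs, le_refl 0, by ring, by ring, by
      simp [h1], by ring⟩
  · set D := h₁ + h₂ with hDdef
    have hDne : D ≠ 0 := ne_of_gt hD
    refine ⟨s * (h₁ / D), t * (h₂ / D), s * (h₂ / D), t * (h₁ / D),
      by positivity, by positivity, by positivity, by positivity, ?_, ?_, ?_, by ring⟩
    · field_simp; ring
    · field_simp; ring
    · have : s * (h₁ / D) * (1 + z) + t * (h₁ / D) * (1 - z)
          = (h₁ / D) * (s * (1 + z) + t * (1 - z)) := by ring
      rw [this, ← hsum, div_mul_cancel₀ _ hDne]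
end

section
/- For all real numbers α, β with 0 ≤ α ≤ 1 and 0 ≤ β ≤ 1, setting λ = √(αβ) + √((1−α)(1−β)), one has the identity (α + β − 1)²·(1 − λ²) + (α − β)²·λ² = λ²·(1 − λ²). -/
/-- The ellipse identity: for `α, β ∈ [0,1]` and
`λ = √(αβ) + √((1-α)(1-β))`, one has
`(α+β-1)²(1-λ²) + (α-β)² λ² = λ²(1-λ²)`. -/
theorem ellipse_identity (α β : ℝ)
    (hα : 0 ≤ α) (hα' : α ≤ 1) (hβ : 0 ≤ β) (hβ' : β ≤ 1) :
    (α + β - 1) ^ 2 * (1 - (Real.sqrt (α * β) + Real.sqrt ((1 - α) * (1 - β))) ^ 2)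
      + (α - β) ^ 2 * (Real.sqrt (α * β) + Real.sqrt ((1 - α) * (1 - β))) ^ 2
      = (Real.sqrt (α * β) + Real.sqrt ((1 - α) * (1 - β))) ^ 2
        * (1 - (Real.sqrt (α * β) + Real.sqrt ((1 - α) * (1 - β))) ^ 2) := by
  set s := Real.sqrt (α * β) with hs
  set t := Real.sqrt ((1 - α) * (1 - β)) with ht
  have ha : s ^ 2 = α * β := Real.sq_sqrt (by positivity)
  have hb : t ^ 2 = (1 - α) * (1 - β) := Real.sq_sqrt (by nlinarith)
  linear_combination (s ^ 2 + 5 * t ^ 2 + 4 * s * t - α * β - (1 - α) * (1 - β)) * ha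
    + (s ^ 2 + t ^ 2 + 4 * s * t + 3 * (α * β) - (1 - α) * (1 - β)) * hb
end

section
/- Let z, r, z', r' be real numbers with z² + r² ≤ 1, r ≠ 0, r'²·(1 − z²) ≤ r²·(1 − z'²), and |r'| ≤ |r|. Then there exist real numbers α, β ∈ [0,1] and signs ε₀, ε₁ ∈ {−1, +1} such that the matrices K₀ = [[ε₀√α, 0], [0, √β]] and K₁ = [[0, √(1−β)], [ε₁√(1−α), 0]] satisfy K₀† K₀ + K₁† K₁ = I and K₀ ρ(z,r) K₀† + K₁ ρ(z,r) K₁† = ρ(z',r'). In particular K₀ is incoherent (diagonal) and K₁ is incoherent (anti-diagonal), so {K₀, K₁} is an incoherent operation transforming ρ(z,r) into ρ(z',r'). -/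
open Matrix

lemma aux_nonneg (z zp a : ℝ) (hz : z^2 < 1) (hzp : zp^2 ≤ 1) (ha0 : 0 ≤ a)
    (ha1 : a ≤ 1) (hell : a*(1-z^2) ≤ 1-zp^2) :
    0 ≤ (1-zp)*(1-a*(1-z^2)) - (1-z)*a*z*zp := by
  have hz1 : z < 1 := by nlinarith
  have hz1' : -1 < z := by nlinarith
  have hzp1 : zp ≤ 1 := by nlinarith
  have hzp1' : -1 ≤ zp := by nlinarith
  rcases le_or_gt 0 (z^2 - z*zp - (1-zp)) with h | h
  · nlinarith [mul_nonneg ha0 h]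
  · rcases le_or_gt (z^2) (zp^2) with hc | hc
    · have h1 : 0 ≤ (1 - zp^2 - a*(1-z^2)) * (-(z^2 - z*zp - (1-zp))) :=
        mul_nonneg (by linarith) (by linarith)
      have h2 : 0 ≤ zp*(zp-z) := by nlinarith
      have h3 : 0 ≤ (1-zp)*(1-z)*(zp*(zp-z)) :=
        mul_nonneg (mul_nonneg (by linarith) (by linarith)) h2
      nlinarith [h1, h3, mul_pos (sub_pos.2 hz1) (by linarith : (0:ℝ) < 1+z)]
    · have h4 : 0 ≤ (1-a) * (-(z^2 - z*zp - (1-zp))) :=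
        mul_nonneg (by linarith) (by linarith)
      nlinarith [h4]

/-- upper bound: `(1-z)*t*w ≤ A1`, given `P > 0`. -/
lemma aux_upper (z zp t w : ℝ) (hz : z^2 < 1) (hzp : zp^2 ≤ 1) (ht0 : 0 ≤ t)
    (ht1 : t ≤ 1) (hell : t^2*(1-z^2) ≤ 1-zp^2)
    (hP : 0 < 1 - t^2*(1-z^2)) (hw0 : 0 ≤ w)
    (hw2 : w^2 = (1-t^2)*(1-zp^2-t^2*(1-z^2))) :
    (1-z)*t*w ≤ (1-zp)*(1-t^2*(1-z^2)) - (1-z)*t^2*z*zp := by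
  have hz1 : z < 1 := by nlinarith
  have ha0 : 0 ≤ t^2 := sq_nonneg t
  have ha1 : t^2 ≤ 1 := by nlinarith
  have hA1 : 0 ≤ (1-zp)*(1-t^2*(1-z^2)) - (1-z)*t^2*z*zp :=
    aux_nonneg z zp (t^2) hz hzp ha0 ha1 hell
  have hx0 : 0 ≤ (1-z)*t*w := mul_nonneg (mul_nonneg (by linarith) ht0) hw0
  have hid : ((1-zp)*(1-t^2*(1-z^2)) - (1-z)*t^2*z*zp)^2 - ((1-z)*t*w)^2
      = (1 - t^2*(1-z^2)) * (zp - 1 + t^2*(1-z))^2 := by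
    linear_combination (-((1-z)^2*t^2)) * hw2
  nlinarith [hid, hA1, hx0, mul_nonneg hP.le (sq_nonneg (zp - 1 + t^2*(1-z)))]

lemma state_transform (a d b c : ℝ) (z r zp rp : ℝ)
    (h00 : a^2*(1+z) + b^2*(1-z) = 1+zp)
    (h01 : (a*d + b*c)*r = rp)
    (h11 : d^2*(1-z) + c^2*(1+z) = 1-zp) :
    !![(a:ℂ),0;0,(d:ℂ)] * qubit z r * !![(a:ℂ),0;0,(d:ℂ)]ᴴ
    + !![0,(b:ℂ);(c:ℂ),0] * qubit z r * !![0,(b:ℂ);(c:ℂ),0]ᴴ = qubit zp rp := by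
  have c00 : ((a:ℂ))^2*(1+(z:ℂ)) + (b:ℂ)^2*(1-(z:ℂ)) = 1+(zp:ℂ) := by
    exact_mod_cast congrArg (Complex.ofReal) h00
  have c01 : ((a:ℂ)*(d:ℂ) + (b:ℂ)*(c:ℂ))*(r:ℂ) = (rp:ℂ) := by
    exact_mod_cast congrArg (Complex.ofReal) h01
  have c11 : ((d:ℂ))^2*(1-(z:ℂ)) + (c:ℂ)^2*(1+(z:ℂ)) = 1-(zp:ℂ) := by
    exact_mod_cast congrArg (Complex.ofReal) h11
  ext i j
  fin_cases i <;> fin_cases j <;>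
    simp [qubit, Matrix.mul_apply, Fin.sum_univ_two, Matrix.conjTranspose_apply,
      Matrix.vecMul, dotProduct, Complex.conj_ofReal]
  · linear_combination (1/2 : ℂ) * c00
  · linear_combination (1/2 : ℂ) * c01
  · linear_combination (1/2 : ℂ) * c01
  · linear_combination (1/2 : ℂ) * c11

lemma completeness (a d b c : ℝ)
    (h0 : a^2 + c^2 = 1) (h1 : d^2 + b^2 = 1) :
    !![(a:ℂ),0;0,(d:ℂ)]ᴴ * !![(a:ℂ),0;0,(d:ℂ)]
    + !![0,(b:ℂ);(c:ℂ),0]ᴴ * !![0,(b:ℂ);(c:ℂ),0] = 1 := by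
  have c0 : ((a:ℂ))^2 + (c:ℂ)^2 = 1 := by exact_mod_cast congrArg (Complex.ofReal) h0
  have c1 : ((d:ℂ))^2 + (b:ℂ)^2 = 1 := by exact_mod_cast congrArg (Complex.ofReal) h1
  ext i j
  fin_cases i <;> fin_cases j <;>
    simp [Matrix.mul_apply, Fin.sum_univ_two, Matrix.conjTranspose_apply,
      Matrix.one_apply, Complex.conj_ofReal]
  · linear_combination c0
  · linear_combination c1

lemma inc_diag (x y : ℂ) : Incoherent !![x,0;0,y] := by
  intro j i i' h h'
  fin_cases j <;> fin_cases i <;> fin_cases i' <;> simp_all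

lemma inc_anti (x y : ℂ) : Incoherent !![0,x;y,0] := by
  intro j i i' h h'
  fin_cases j <;> fin_cases i <;> fin_cases i' <;> simp_all

set_option maxHeartbeats 1000000 in
lemma key_exists (z zp t : ℝ) (hz : z^2 < 1) (ht0 : 0 ≤ t) (ht1 : t ≤ 1)
    (hell : t^2*(1-z^2) ≤ 1-zp^2) :
    ∃ α β ε₁ : ℝ, 0 ≤ α ∧ α ≤ 1 ∧ 0 ≤ β ∧ β ≤ 1 ∧ (ε₁ = 1 ∨ ε₁ = -1) ∧
      α*(1+z) + (1-β)*(1-z) = 1+zp ∧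
      Real.sqrt α * Real.sqrt β + ε₁ * (Real.sqrt (1-α) * Real.sqrt (1-β)) = t := by
  have h1z2 : 0 < 1 - z^2 := by linarith
  have hz1 : z < 1 := by nlinarith
  have hz1' : -1 < z := by nlinarith
  have hzp2 : zp^2 ≤ 1 := by nlinarith [mul_nonneg (sq_nonneg t) h1z2.le]
  have hzp1 : zp ≤ 1 := by nlinarith
  have hzp1' : -1 ≤ zp := by nlinarith
  have ht2' : t^2 ≤ 1 := by nlinarith
  have hz2n : (-z)^2 < 1 := by rw [neg_sq]; exact hz
  have hzp2n : (-zp)^2 ≤ 1 := by rw [neg_sq]; exact hzp2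
  have hell1 : t^2*(1-z^2) ≤ 1-(-zp)^2 := by rw [neg_sq]; exact hell
  have hell2 : t^2*(1-(-z)^2) ≤ 1-zp^2 := by rw [neg_sq]; exact hell
  have hell3 : t^2*(1-(-z)^2) ≤ 1-(-zp)^2 := by rw [neg_sq, neg_sq]; exact hell
  have hP0 : 0 ≤ 1 - t^2*(1-z^2) := by nlinarith
  rcases eq_or_lt_of_le hP0 with hP | hP
  · -- degenerate: t = 1, z = 0, zp = 0
    have hzz : t^2*(1-z^2) = 1 := by linarith
    have ht2 : t^2 = 1 := by nlinarith [sq_nonneg (t*z)]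
    have htt : (t-1)*(t+1) = 0 := by linear_combination ht2
    have ht : t = 1 := by
      rcases mul_eq_zero.mp htt with h | h
      · linarith
      · linarith
    rw [ht] at hzz
    have hz20 : z^2 = 0 := by linarith
    have hz0 : z = 0 := pow_eq_zero_iff (two_ne_zero) |>.mp hz20
    rw [ht, hz20] at hell
    have hzp20 : zp^2 = 0 := by linarith [sq_nonneg zp]
    have hzp0 : zp = 0 := pow_eq_zero_iff (two_ne_zero) |>.mp hzp20
    exact ⟨1, 1, 1, zero_le_one, le_refl 1, zero_le_one, le_refl 1, Or.inl rfl,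
      by rw [hz0, hzp0]; ring, by norm_num [ht]⟩
  · obtain ⟨w, hw0, hw2⟩ : ∃ w : ℝ, 0 ≤ w ∧ w^2 = (1-t^2)*(1-zp^2-t^2*(1-z^2)) :=
      ⟨Real.sqrt ((1-t^2)*(1-zp^2-t^2*(1-z^2))), Real.sqrt_nonneg _,
        Real.sq_sqrt (mul_nonneg (by nlinarith) (by linarith))⟩
    have htw : 0 ≤ t*w := mul_nonneg ht0 hw0
    obtain ⟨u, hu, hu0⟩ : ∃ u : ℝ, 2*(1 - t^2*(1-z^2))*u = t*(1 - t^2*(1-z^2) + z*zp) + w ∧ 0 ≤ u := by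
      refine ⟨(t*(1 - t^2*(1-z^2) + z*zp) + w)/(2*(1 - t^2*(1-z^2))), by field_simp, ?_⟩
      have ht2 : (0:ℝ) ≤ 1 - t^2 := by nlinarith
      have hQ0 : 0 ≤ 1 - t^2*(1-z^2) + z*zp := by
        nlinarith [sq_nonneg (z+zp), mul_nonneg h1z2.le ht2]
      positivity
    obtain ⟨α, hα⟩ : ∃ α : ℝ, 2*α = (1-z)*(1-t^2+2*t*u) + z + zp := ⟨((1-z)*(1-t^2+2*t*u) + z + zp)/2, by ring⟩
    obtain ⟨β, hβ⟩ : ∃ β : ℝ, 2*β = (1+z)*(1-t^2+2*t*u) - z - zp := ⟨((1+z)*(1-t^2+2*t*u) - z - zp)/2, by ring⟩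
    -- scaled forms
    have hα2 : 2*(1 - t^2*(1-z^2))*α = (1+zp)*(1 - t^2*(1-z^2)) + (1-z)*(t^2*z*zp + t*w) := by
      linear_combination (1 - t^2*(1-z^2))*hα + (1-z)*t*hu
    have hβ2 : 2*(1 - t^2*(1-z^2))*β = (1-zp)*(1 - t^2*(1-z^2)) + (1+z)*(t^2*z*zp + t*w) := by
      linear_combination (1 - t^2*(1-z^2))*hβ + (1+z)*t*hu
    -- the four bounds
    have h2P : (0:ℝ) < 2*(1 - t^2*(1-z^2)) := by linarith
    have hα0 : 0 ≤ α := by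
      have h := aux_nonneg z (-zp) (t^2) hz hzp2n (sq_nonneg t) ht2' hell1
      have key0 : 0 ≤ 2*(1 - t^2*(1-z^2))*α := by
        linarith [mul_nonneg (by linarith : (0:ℝ) ≤ 1-z) htw, hα2, h]
      exact (mul_nonneg_iff_of_pos_left h2P).mp key0
    have hβ0 : 0 ≤ β := by
      have h := aux_nonneg (-z) zp (t^2) hz2n hzp2 (sq_nonneg t) ht2' hell2
      have key0 : 0 ≤ 2*(1 - t^2*(1-z^2))*β := by
        linarith [mul_nonneg (by linarith : (0:ℝ) ≤ 1+z) htw, hβ2, h]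
      exact (mul_nonneg_iff_of_pos_left h2P).mp key0
    have hα1 : α ≤ 1 := by
      have h := aux_upper z zp t w hz hzp2 ht0 ht1 hell hP hw0 hw2
      have key1 : 2*(1 - t^2*(1-z^2))*α ≤ 2*(1 - t^2*(1-z^2))*1 := by linarith [hα2, h]
      exact le_of_mul_le_mul_left key1 h2P
    have hβ1 : β ≤ 1 := by
      have hPn : 0 < 1 - t^2*(1-(-z)^2) := by rw [neg_sq]; exact hP
      have hw2n : w^2 = (1-t^2)*(1-(-zp)^2-t^2*(1-(-z)^2)) := by rw [neg_sq, neg_sq]; exact hw2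
      have h := aux_upper (-z) (-zp) t w hz2n hzp2n ht0 ht1 hell3 hPn hw0 hw2n
      have key1 : 2*(1 - t^2*(1-z^2))*β ≤ 2*(1 - t^2*(1-z^2))*1 := by linarith [hβ2, h]
      exact le_of_mul_le_mul_left key1 h2P
    -- α β = u^2
    have hab : α*β = u^2 := by
      have h4 : (2*(1 - t^2*(1-z^2))*α)*(2*(1 - t^2*(1-z^2))*β)
          = (2*(1 - t^2*(1-z^2))*u)^2 := by
        rw [hα2, hβ2, hu]; linear_combination (-(1 - t^2*(1-z^2))) * hw2
      have h5 : (2*(1 - t^2*(1-z^2)))^2 * (α*β) = (2*(1 - t^2*(1-z^2)))^2 * u^2 := by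
        linear_combination h4
      exact mul_left_cancel₀ (by positivity) h5
    have h1ab : (1-α)*(1-β) = (t-u)^2 := by
      linear_combination hab - (1/2)*hα - (1/2)*hβ
    have hE1 : α*(1+z) + (1-β)*(1-z) = 1+zp := by linear_combination (1+z)/2*hα - (1-z)/2*hβ
    have hsab : Real.sqrt α * Real.sqrt β = u := by
      rw [← Real.sqrt_mul hα0, hab, Real.sqrt_sq hu0]
    have hsab' : Real.sqrt (1-α) * Real.sqrt (1-β) = |t-u| := by
      rw [← Real.sqrt_mul (by linarith), h1ab, Real.sqrt_sq_eq_abs]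
    rcases le_or_gt u t with hut | hut
    · exact ⟨α, β, 1, hα0, hα1, hβ0, hβ1, Or.inl rfl, hE1, by
        rw [hsab, hsab', abs_of_nonneg (by linarith)]; ring⟩
    · exact ⟨α, β, -1, hα0, hα1, hβ0, hβ1, Or.inr rfl, hE1, by
        rw [hsab, hsab', abs_of_neg (by linarith)]; ring⟩

set_option maxHeartbeats 1000000 in
/-- Any target state inside the IO-transformation region of `ρ(z,r)` can be reached
by an incoherent operation with one diagonal and one anti-diagonal Kraus operator. -/
theorem special_io_realizes_transformation (z r z' r' : ℝ)
    (hzr : z ^ 2 + r ^ 2 ≤ 1) (hr : r ≠ 0)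
    (hellipse : r' ^ 2 * (1 - z ^ 2) ≤ r ^ 2 * (1 - z' ^ 2))
    (hcoh : |r'| ≤ |r|) :
    ∃ α β ε₀ ε₁ : ℝ, 0 ≤ α ∧ α ≤ 1 ∧ 0 ≤ β ∧ β ≤ 1 ∧
      (ε₀ = 1 ∨ ε₀ = -1) ∧ (ε₁ = 1 ∨ ε₁ = -1) ∧
      (!![((ε₀ * Real.sqrt α : ℝ) : ℂ), 0; 0, ((Real.sqrt β : ℝ) : ℂ)]ᴴ *
         !![((ε₀ * Real.sqrt α : ℝ) : ℂ), 0; 0, ((Real.sqrt β : ℝ) : ℂ)] +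
       !![0, ((Real.sqrt (1 - β) : ℝ) : ℂ); ((ε₁ * Real.sqrt (1 - α) : ℝ) : ℂ), 0]ᴴ *
         !![0, ((Real.sqrt (1 - β) : ℝ) : ℂ); ((ε₁ * Real.sqrt (1 - α) : ℝ) : ℂ), 0] = 1) ∧
      (!![((ε₀ * Real.sqrt α : ℝ) : ℂ), 0; 0, ((Real.sqrt β : ℝ) : ℂ)] * qubit z r *
         !![((ε₀ * Real.sqrt α : ℝ) : ℂ), 0; 0, ((Real.sqrt β : ℝ) : ℂ)]ᴴ +
       !![0, ((Real.sqrt (1 - β) : ℝ) : ℂ); ((ε₁ * Real.sqrt (1 - α) : ℝ) : ℂ), 0] * qubit z r *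
         !![0, ((Real.sqrt (1 - β) : ℝ) : ℂ); ((ε₁ * Real.sqrt (1 - α) : ℝ) : ℂ), 0]ᴴ
        = qubit z' r') ∧
      Incoherent !![((ε₀ * Real.sqrt α : ℝ) : ℂ), 0; 0, ((Real.sqrt β : ℝ) : ℂ)] ∧
      Incoherent !![0, ((Real.sqrt (1 - β) : ℝ) : ℂ); ((ε₁ * Real.sqrt (1 - α) : ℝ) : ℂ), 0] := by
  have hr2 : 0 < r^2 := by positivity
  have hz : z^2 < 1 := by nlinarith
  have habs : (0:ℝ) < |r| := abs_pos.mpr hr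
  have ht0 : 0 ≤ |r'|/|r| := by positivity
  have ht1 : |r'|/|r| ≤ 1 := (div_le_one habs).mpr hcoh
  have htr : (|r'|/|r|)^2 = r'^2/r^2 := by rw [div_pow, sq_abs, sq_abs]
  have hell' : (|r'|/|r|)^2*(1-z^2) ≤ 1-z'^2 := by
    rw [htr, div_mul_eq_mul_div, div_le_iff₀ hr2]
    nlinarith [hellipse]
  obtain ⟨α, β, ε₁, hα0, hα1, hβ0, hβ1, hε₁, hE1, hE3⟩ :=
    key_exists z z' (|r'|/|r|) hz ht0 ht1 hell'
  set σ : ℝ := if 0 ≤ r'*r then 1 else -1 with hσdef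
  have hσ : σ = 1 ∨ σ = -1 := by rw [hσdef]; split_ifs <;> simp
  have hσ2 : σ^2 = 1 := by rcases hσ with h | h <;> rw [h] <;> norm_num
  have hσt : σ*(|r'|/|r|)*r = r' := by
    have hkey : σ * |r'| * r = r' * |r| := by
      rw [hσdef]
      split_ifs with h <;>
        rcases abs_cases r with ⟨h1,h2⟩|⟨h1,h2⟩ <;>
        rcases abs_cases r' with ⟨h3,h4⟩|⟨h3,h4⟩ <;>
        rw [h1, h3] <;> nlinarith
    have e : σ * (|r'|/|r|) * r = (σ * |r'| * r)/|r| := by ring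
    rw [e, hkey, mul_div_assoc, div_self habs.ne', mul_one]
  have hε₁2 : ε₁^2 = 1 := by rcases hε₁ with h | h <;> rw [h] <;> norm_num
  -- square facts
  have sα : Real.sqrt α ^ 2 = α := Real.sq_sqrt hα0
  have sβ : Real.sqrt β ^ 2 = β := Real.sq_sqrt hβ0
  have sα' : Real.sqrt (1-α) ^ 2 = 1-α := Real.sq_sqrt (by linarith)
  have sβ' : Real.sqrt (1-β) ^ 2 = 1-β := Real.sq_sqrt (by linarith)
  refine ⟨α, β, σ, σ*ε₁, hα0, hα1, hβ0, hβ1, hσ, ?_, ?_, ?_, inc_diag _ _, inc_anti _ _⟩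
  · rcases hσ with h | h <;> rcases hε₁ with h' | h' <;> rw [h, h'] <;> norm_num
  · refine completeness _ _ _ _ ?_ ?_
    · have e : (σ*Real.sqrt α)^2 + (σ*ε₁*Real.sqrt (1-α))^2
          = σ^2*(Real.sqrt α^2) + σ^2*ε₁^2*(Real.sqrt (1-α)^2) := by ring
      rw [e, sα, sα', hσ2, hε₁2]; ring
    · rw [sβ, sβ']; ring
  · refine state_transform _ _ _ _ z r z' r' ?_ ?_ ?_
    · have e : (σ*Real.sqrt α)^2*(1+z) + Real.sqrt (1-β)^2*(1-z)
          = σ^2*(Real.sqrt α^2)*(1+z) + (Real.sqrt (1-β)^2)*(1-z) := by ring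
      rw [e, sα, sβ', hσ2]; linear_combination hE1
    · have : ((σ*Real.sqrt α)*(Real.sqrt β) + (Real.sqrt (1-β))*(σ*ε₁*Real.sqrt (1-α)))*r
          = σ*((Real.sqrt α * Real.sqrt β + ε₁*(Real.sqrt (1-α)*Real.sqrt (1-β)))*r) := by ring
      rw [this, hE3]; linear_combination hσt
    · have e : Real.sqrt β^2*(1-z) + (σ*ε₁*Real.sqrt (1-α))^2*(1+z)
          = (Real.sqrt β^2)*(1-z) + σ^2*ε₁^2*(Real.sqrt (1-α)^2)*(1+z) := by ring
      rw [e, sβ, sα', hσ2, hε₁2]; linear_combination -hE1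
end

section
/- Let {K_n} be a finite family of incoherent 2×2 complex matrices with ∑_n K_n† K_n = I, let ρ be a 2×2 density matrix, and set σ = ∑_n K_n ρ K_n†. Then |σ₀₁| ≤ |ρ₀₁|; that is, the l₁ norm of coherence C_{l₁}(σ) = 2|σ₀₁| does not exceed C_{l₁}(ρ) = 2|ρ₀₁|. -/
open Matrix
open scoped ComplexOrder

/-!
Write `K = [[a, b], [c, d]]` for a Kraus operator. Incoherence kills the products `a c̄` and
`b d̄`, so the off-diagonal entry of `K ρ Kᴴ` is `a ρ₀₁ d̄ + b ρ₁₀ c̄`, whose norm is at most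
`(|a| |d| + |b| |c|) |ρ₀₁|` because `|ρ₁₀| = |ρ₀₁|`. By AM–GM the factors `|a| |d| + |b| |c|`
sum over the Kraus operators to at most half the sum of the squared column norms,
which is `(1 + 1) / 2` by completeness `∑ Kᴴ K = 1`.
-/

theorem sum_sum_norm_sq_apply_eq_one {𝕜 ι m : Type*} [RCLike 𝕜] [Fintype ι] [Fintype m]
    [DecidableEq m] {K : ι → Matrix m m 𝕜} (hK : ∑ i, (K i)ᴴ * K i = 1) (j : m) :
    ∑ i, ∑ k, ‖K i k j‖ ^ 2 = 1 := by
  have hjj := congrFun (congrFun hK j) j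
  simp only [Matrix.sum_apply, mul_apply, conjTranspose_apply, RCLike.star_def, RCLike.conj_mul,
    one_apply_eq] at hjj
  exact_mod_cast hjj

namespace Incoherent

variable {K : Matrix (Fin 2) (Fin 2) ℂ}

theorem mul_star_eq_zero (hK : Incoherent K) {i i' : Fin 2} (h : i ≠ i') (j : Fin 2) :
    K i j * star (K i' j) = 0 := by
  by_contra hne
  exact h (hK j i i' (left_ne_zero_of_mul hne) (star_ne_zero.mp (right_ne_zero_of_mul hne)))

theorem mul_mul_conjTranspose_apply_zero_one (hK : Incoherent K) (ρ : Matrix (Fin 2) (Fin 2) ℂ) :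
    (K * ρ * Kᴴ) 0 1 = K 0 0 * ρ 0 1 * star (K 1 1) + K 0 1 * ρ 1 0 * star (K 1 0) := by
  have h0 := hK.mul_star_eq_zero zero_ne_one 0
  have h1 := hK.mul_star_eq_zero zero_ne_one 1
  simp only [mul_apply, conjTranspose_apply, Fin.sum_univ_two]
  linear_combination ρ 0 0 * h0 + ρ 1 1 * h1

theorem norm_mul_mul_conjTranspose_apply_zero_one_le (hK : Incoherent K)
    {ρ : Matrix (Fin 2) (Fin 2) ℂ} (hρ : ρ.IsHermitian) :
    ‖(K * ρ * Kᴴ) 0 1‖ ≤ (‖K 0 0‖ * ‖K 1 1‖ + ‖K 0 1‖ * ‖K 1 0‖) * ‖ρ 0 1‖ := by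
  have hρ10 : ‖ρ 1 0‖ = ‖ρ 0 1‖ := by rw [← hρ.apply 0 1, norm_star]
  rw [hK.mul_mul_conjTranspose_apply_zero_one]
  refine (norm_add_le _ _).trans_eq ?_
  simp only [norm_mul, norm_star, hρ10]
  ring

end Incoherent

theorem sum_norm_mul_norm_add_norm_mul_norm_le_one {ι : Type*} [Fintype ι]
    {K : ι → Matrix (Fin 2) (Fin 2) ℂ} (hK : ∑ i, (K i)ᴴ * K i = 1) :
    ∑ i, (‖K i 0 0‖ * ‖K i 1 1‖ + ‖K i 0 1‖ * ‖K i 1 0‖) ≤ 1 := by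
  have h0 := sum_sum_norm_sq_apply_eq_one hK 0
  have h1 := sum_sum_norm_sq_apply_eq_one hK 1
  simp only [Fin.sum_univ_two] at h0 h1
  have amgm : ∀ i, ‖K i 0 0‖ * ‖K i 1 1‖ + ‖K i 0 1‖ * ‖K i 1 0‖ ≤
      ((‖K i 0 0‖ ^ 2 + ‖K i 1 0‖ ^ 2) + (‖K i 0 1‖ ^ 2 + ‖K i 1 1‖ ^ 2)) / 2 := fun i => by
    nlinarith [sq_nonneg (‖K i 0 0‖ - ‖K i 1 1‖), sq_nonneg (‖K i 0 1‖ - ‖K i 1 0‖)]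
  calc _ ≤ ∑ i, ((‖K i 0 0‖ ^ 2 + ‖K i 1 0‖ ^ 2) + (‖K i 0 1‖ ^ 2 + ‖K i 1 1‖ ^ 2)) / 2 :=
        Finset.sum_le_sum fun i _ => amgm i
    _ = 1 := by rw [← Finset.sum_div, Finset.sum_add_distrib, h0, h1]; norm_num

theorem io_l1_coherence_nonincreasing_general (n : ℕ)
    (K : Fin n → Matrix (Fin 2) (Fin 2) ℂ)
    (hinc : ∀ i, Incoherent (K i)) (hsum : ∑ i, (K i)ᴴ * K i = 1)
    (ρ : Matrix (Fin 2) (Fin 2) ℂ) (hρ : ρ.PosSemidef) :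
    ‖(∑ i, K i * ρ * (K i)ᴴ) 0 1‖ ≤ ‖ρ 0 1‖ := by
  rw [Matrix.sum_apply]
  calc ‖∑ i, (K i * ρ * (K i)ᴴ) 0 1‖
      ≤ ∑ i, (‖K i 0 0‖ * ‖K i 1 1‖ + ‖K i 0 1‖ * ‖K i 1 0‖) * ‖ρ 0 1‖ :=
        (norm_sum_le _ _).trans <| Finset.sum_le_sum fun i _ =>
          (hinc i).norm_mul_mul_conjTranspose_apply_zero_one_le hρ.isHermitian
    _ = (∑ i, (‖K i 0 0‖ * ‖K i 1 1‖ + ‖K i 0 1‖ * ‖K i 1 0‖)) * ‖ρ 0 1‖ :=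
        (Finset.sum_mul ..).symm
    _ ≤ ‖ρ 0 1‖ :=
        mul_le_of_le_one_left (norm_nonneg _) (sum_norm_mul_norm_add_norm_mul_norm_le_one hsum)

/-- An incoherent operation does not increase the `l₁`-norm of coherence of a qubit
state: `|σ₀₁| ≤ |ρ₀₁|` for `σ = ∑ₙ Kₙ ρ Kₙᴴ`. -/
theorem io_l1_coherence_nonincreasing (n : ℕ)
    (K : Fin n → Matrix (Fin 2) (Fin 2) ℂ)
    (hinc : ∀ i, Incoherent (K i)) (hsum : ∑ i, (K i)ᴴ * K i = 1)
    (ρ : Matrix (Fin 2) (Fin 2) ℂ) (hρ : ρ.PosSemidef) (htr : ρ.trace = 1) :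
    ‖(∑ i, K i * ρ * (K i)ᴴ) 0 1‖ ≤ ‖ρ 0 1‖ :=
  io_l1_coherence_nonincreasing_general n K hinc hsum ρ hρ
end

section
/- Let z, r be real numbers with z² + r² ≤ 1 and r ≥ 0. Define six qubit channels by: Λ₁(ρ) = P₀ρP₀ + P₁ρP₁ (full dephasing, where P₀ = |0⟩⟨0|, P₁ = |1⟩⟨1|); Λ₂(ρ) = XP₀ρP₀X + XP₁ρP₁X (dephasing followed by the swap X = |0⟩⟨1| + |1⟩⟨0|); Λ₃(ρ) = |0⟩⟨0|ρ|0⟩⟨0| + |0⟩⟨1|ρ|1⟩⟨0|; Λ₄(ρ) = |1⟩⟨0|ρ|0⟩⟨1| + |1⟩⟨1|ρ|1⟩⟨1|; Λ₅±(ρ) = UρU† with U = diag(1, ±1); Λ₆±(ρ) = (XU)ρ(XU)† with U = diag(1, ±1). Then the set of states of the form ∑ᵢ pᵢ Λᵢ(ρ(z,r)) over all convex weights pᵢ ≥ 0 with ∑ᵢ pᵢ = 1 (ranging over the channels above) equals the set of states ρ(z',r') with (z', r') in the convex hull of the six points (1,0), (−1,0), (z,r), (z,−r), (−z,r), (−z,−r)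 in the (z,r)-plane. -/
open Matrix

/-- The projector `|0⟩⟨0|`. -/
def P0 : Matrix (Fin 2) (Fin 2) ℂ := !![1, 0; 0, 0]

/-- The projector `|1⟩⟨1|`. -/
def P1 : Matrix (Fin 2) (Fin 2) ℂ := !![0, 0; 0, 1]

/-- The swap `X = |0⟩⟨1| + |1⟩⟨0|`. -/
def Xgate : Matrix (Fin 2) (Fin 2) ℂ := !![0, 1; 1, 0]

/-- The eight single-qubit PIO channels with real phases:
dephasing `Λ₁`, swapped dephasing `Λ₂`, the coherence-breaking channels `Λ₃`, `Λ₄`,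
and the incoherent unitary channels `Λ₅±`, `Λ₆±`. -/
noncomputable def PIOchan :
    Fin 8 → Matrix (Fin 2) (Fin 2) ℂ → Matrix (Fin 2) (Fin 2) ℂ :=
  ![fun ρ => P0 * ρ * P0 + P1 * ρ * P1,
    fun ρ => Xgate * (P0 * ρ * P0) * Xgate + Xgate * (P1 * ρ * P1) * Xgate,
    fun ρ => !![1, 0; 0, 0] * ρ * !![1, 0; 0, 0]ᴴ + !![0, 1; 0, 0] * ρ * !![0, 1; 0, 0]ᴴ,
    fun ρ => !![0, 0; 1, 0] * ρ * !![0, 0; 1, 0]ᴴ + !![0, 0; 0, 1] * ρ * !![0, 0; 0, 1]ᴴ,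
    fun ρ => !![1, 0; 0, 1] * ρ * !![1, 0; 0, 1]ᴴ,
    fun ρ => !![1, 0; 0, -1] * ρ * !![1, 0; 0, -1]ᴴ,
    fun ρ => (Xgate * !![1, 0; 0, 1]) * ρ * (Xgate * !![1, 0; 0, 1])ᴴ,
    fun ρ => (Xgate * !![1, 0; 0, -1]) * ρ * (Xgate * !![1, 0; 0, -1])ᴴ]


section PIOaux

lemma qubit_decomp (x y : ℝ) : qubit x y =
    (1/2:ℂ) • (1 : Matrix (Fin 2) (Fin 2) ℂ)
      + (x:ℂ) • ((1/2:ℂ) • !![1,0;0,-1])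
      + (y:ℂ) • ((1/2:ℂ) • !![0,1;1,0]) := by
  ext i j
  fin_cases i <;> fin_cases j <;> simp [qubit, Matrix.one_apply] <;> ring

lemma sum_smul_qubit {n : ℕ} (p a b : Fin n → ℝ) (hp : ∑ i, p i = 1) :
    ∑ i, ((p i : ℂ) • qubit (a i) (b i)) = qubit (∑ i, p i * a i) (∑ i, p i * b i) := by
  have hpc : ∑ i, (p i : ℂ) = 1 := by
    rw [← Complex.ofReal_sum, hp, Complex.ofReal_one]
  simp only [qubit_decomp, smul_add, smul_smul]
  rw [Finset.sum_add_distrib, Finset.sum_add_distrib,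
    ← Finset.sum_smul, ← Finset.sum_smul, ← Finset.sum_smul]
  push_cast
  have e1 : (∑ i, (p i:ℂ) * (1/2)) = 1/2 := by rw [← Finset.sum_mul, hpc, one_mul]
  have e2 : ∑ i, (p i:ℂ)*((a i:ℂ)*(1/2)) = (∑ i, (p i:ℂ)*(a i))*(1/2) := by
    rw [Finset.sum_mul]; exact Finset.sum_congr rfl fun i _ => by ring
  have e3 : ∑ i, (p i:ℂ)*((b i:ℂ)*(1/2)) = (∑ i, (p i:ℂ)*(b i))*(1/2) := by
    rw [Finset.sum_mul]; exact Finset.sum_congr rfl fun i _ => by ring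
  rw [e1, e2, e3]

lemma entry_ext (σ τ : Matrix (Fin 2) (Fin 2) ℂ)
    (h00 : σ 0 0 = τ 0 0) (h01 : σ 0 1 = τ 0 1)
    (h10 : σ 1 0 = τ 1 0) (h11 : σ 1 1 = τ 1 1) : σ = τ := by
  ext a b; fin_cases a <;> fin_cases b <;> assumption

lemma chan0 (z r : ℝ) : PIOchan 0 (qubit z r) = qubit z 0 := by
  rw [show PIOchan 0 = fun ρ => P0 * ρ * P0 + P1 * ρ * P1 from rfl]
  refine entry_ext _ _ ?_ ?_ ?_ ?_ <;>
    simp [P0, P1, qubit, Matrix.mul_apply, Fin.sum_univ_two] <;> try ring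

lemma chan1 (z r : ℝ) : PIOchan 1 (qubit z r) = qubit (-z) 0 := by
  rw [show PIOchan 1 = fun ρ => Xgate * (P0 * ρ * P0) * Xgate + Xgate * (P1 * ρ * P1) * Xgate from rfl]
  refine entry_ext _ _ ?_ ?_ ?_ ?_ <;>
    simp [P0, P1, Xgate, qubit, Matrix.mul_apply, Fin.sum_univ_two] <;> try ring

lemma chan2 (z r : ℝ) : PIOchan 2 (qubit z r) = qubit 1 0 := by
  rw [show PIOchan 2 = fun ρ => !![1, 0; 0, 0] * ρ * !![1, 0; 0, 0]ᴴ + !![0, 1; 0, 0] * ρ * !![0, 1; 0, 0]ᴴ from rfl]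
  refine entry_ext _ _ ?_ ?_ ?_ ?_ <;>
    simp [qubit, Matrix.mul_apply, Fin.sum_univ_two, Matrix.conjTranspose_apply, Matrix.vecMul, dotProduct] <;> try ring

lemma chan3 (z r : ℝ) : PIOchan 3 (qubit z r) = qubit (-1) 0 := by
  rw [show PIOchan 3 = fun ρ => !![0, 0; 1, 0] * ρ * !![0, 0; 1, 0]ᴴ + !![0, 0; 0, 1] * ρ * !![0, 0; 0, 1]ᴴ from rfl]
  refine entry_ext _ _ ?_ ?_ ?_ ?_ <;>
    simp [qubit, Matrix.mul_apply, Fin.sum_univ_two, Matrix.conjTranspose_apply, Matrix.vecMul, dotProduct] <;> try ring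

lemma chan4 (z r : ℝ) : PIOchan 4 (qubit z r) = qubit z r := by
  rw [show PIOchan 4 = fun ρ => !![1, 0; 0, 1] * ρ * !![1, 0; 0, 1]ᴴ from rfl]
  refine entry_ext _ _ ?_ ?_ ?_ ?_ <;>
    simp [qubit, Matrix.mul_apply, Fin.sum_univ_two, Matrix.conjTranspose_apply, Matrix.vecMul, dotProduct] <;> try ring

lemma chan5 (z r : ℝ) : PIOchan 5 (qubit z r) = qubit z (-r) := by
  rw [show PIOchan 5 = fun ρ => !![1, 0; 0, -1] * ρ * !![1, 0; 0, -1]ᴴ from rfl]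
  refine entry_ext _ _ ?_ ?_ ?_ ?_ <;>
    simp [qubit, Matrix.mul_apply, Fin.sum_univ_two, Matrix.conjTranspose_apply, Matrix.vecMul, dotProduct] <;> try ring

lemma chan6 (z r : ℝ) : PIOchan 6 (qubit z r) = qubit (-z) r := by
  rw [show PIOchan 6 = fun ρ => (Xgate * !![1, 0; 0, 1]) * ρ * (Xgate * !![1, 0; 0, 1])ᴴ from rfl]
  refine entry_ext _ _ ?_ ?_ ?_ ?_ <;>
    simp [Xgate, qubit, Matrix.mul_apply, Fin.sum_univ_two, Matrix.conjTranspose_apply, Matrix.vecMul, dotProduct] <;> try ring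

lemma chan7 (z r : ℝ) : PIOchan 7 (qubit z r) = qubit (-z) (-r) := by
  rw [show PIOchan 7 = fun ρ => (Xgate * !![1, 0; 0, -1]) * ρ * (Xgate * !![1, 0; 0, -1])ᴴ from rfl]
  refine entry_ext _ _ ?_ ?_ ?_ ?_ <;>
    simp [Xgate, qubit, Matrix.mul_apply, Fin.sum_univ_two, Matrix.conjTranspose_apply, Matrix.vecMul, dotProduct] <;> try ring

lemma chan_eq (z r : ℝ) (i : Fin 8) :
    PIOchan i (qubit z r)
      = qubit (![z, -z, 1, -1, z, z, -z, -z] i) (![0, 0, 0, 0, r, -r, r, -r] i) := by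
  fin_cases i
  · exact chan0 z r
  · exact chan1 z r
  · exact chan2 z r
  · exact chan3 z r
  · exact chan4 z r
  · exact chan5 z r
  · exact chan6 z r
  · exact chan7 z r


noncomputable def vpts (z r : ℝ) : Fin 6 → ℝ × ℝ :=
  ![(1, 0), (-1, 0), (z, r), (z, -r), (-z, r), (-z, -r)]

lemma set_eq_range (z r : ℝ) :
    ({(1, 0), (-1, 0), (z, r), (z, -r), (-z, r), (-z, -r)} : Set (ℝ × ℝ))
      = Set.range (vpts z r) := by
  ext x
  simp [vpts, Matrix.range_cons, Matrix.range_empty]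
  tauto

lemma mem_hull_iff (z r : ℝ) (x : ℝ × ℝ) :
    x ∈ convexHull ℝ
        ({(1, 0), (-1, 0), (z, r), (z, -r), (-z, r), (-z, -r)} : Set (ℝ × ℝ)) ↔
      ∃ q : Fin 6 → ℝ, (∀ i, 0 ≤ q i) ∧ ∑ i, q i = 1 ∧ x = ∑ i, q i • vpts z r i := by
  rw [set_eq_range, convexHull_range_eq_exists_affineCombination]
  constructor
  · rintro ⟨s, w, hw0, hw1, hx⟩
    refine ⟨fun i => if i ∈ s then w i else 0, ?_, ?_, ?_⟩
    · intro i
      by_cases h : i ∈ s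
      · simpa [h] using hw0 i h
      · simp [h]
    · rw [Finset.sum_ite_mem, Finset.univ_inter, hw1]
    · rw [← hx, affineCombination_eq_centerMass hw1, Finset.centerMass_eq_of_sum_1 _ _ hw1]
      rw [Finset.sum_congr rfl
          (fun i (_ : i ∈ Finset.univ) =>
            show (if i ∈ s then w i else 0) • vpts z r i
                = if i ∈ s then w i • vpts z r i else 0 from by split <;> simp),
        Finset.sum_ite_mem, Finset.univ_inter]
  · rintro ⟨q, hq0, hq1, hx⟩
    refine ⟨Finset.univ, q, fun i _ => hq0 i, hq1, ?_⟩
    rw [affineCombination_eq_centerMass hq1, Finset.centerMass_eq_of_sum_1 _ _ hq1, hx]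

noncomputable def avec (z : ℝ) : Fin 8 → ℝ := ![z, -z, 1, -1, z, z, -z, -z]
noncomputable def bvec (r : ℝ) : Fin 8 → ℝ := ![0, 0, 0, 0, r, -r, r, -r]

lemma chan_eq' (z r : ℝ) (i : Fin 8) :
    PIOchan i (qubit z r) = qubit (avec z i) (bvec r i) := chan_eq z r i

end PIOaux

/-- The PIO-transformation region of `ρ(z,r)`: the states reachable by convex
combinations of the single-qubit PIO channels are exactly the `ρ(z',r')` with
`(z',r')` in the convex hull of `(±1,0)`, `(z,±r)`, `(-z,±r)`. -/
theorem pio_transformation_region (z r : ℝ) (hzr : z ^ 2 + r ^ 2 ≤ 1) (hr : 0 ≤ r) :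
    {σ : Matrix (Fin 2) (Fin 2) ℂ |
      ∃ p : Fin 8 → ℝ, (∀ i, 0 ≤ p i) ∧ (∑ i, p i = 1) ∧
        σ = ∑ i, ((p i : ℂ) • PIOchan i (qubit z r))} =
    {σ : Matrix (Fin 2) (Fin 2) ℂ |
      ∃ z' r' : ℝ,
        (z', r') ∈ convexHull ℝ
          ({(1, 0), (-1, 0), (z, r), (z, -r), (-z, r), (-z, -r)} : Set (ℝ × ℝ)) ∧
        σ = qubit z' r'} := by
  ext σ
  simp only [Set.mem_setOf_eq]
  constructor
  · rintro ⟨p, hp0, hp1, rfl⟩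
    refine ⟨∑ i, p i * avec z i, ∑ i, p i * bvec r i, ?_, ?_⟩
    · rw [mem_hull_iff]
      refine ⟨![p 2, p 3, p 4 + p 0 / 2, p 5 + p 0 / 2, p 6 + p 1 / 2, p 7 + p 1 / 2],
        ?_, ?_, ?_⟩
      · intro i
        fin_cases i
        exacts [hp0 2, hp0 3,
          show (0:ℝ) ≤ p 4 + p 0 / 2 by linarith [hp0 4, hp0 0],
          show (0:ℝ) ≤ p 5 + p 0 / 2 by linarith [hp0 5, hp0 0],
          show (0:ℝ) ≤ p 6 + p 1 / 2 by linarith [hp0 6, hp0 1],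
          show (0:ℝ) ≤ p 7 + p 1 / 2 by linarith [hp0 7, hp0 1]]
      · rw [Fin.sum_univ_six]
        rw [Fin.sum_univ_eight] at hp1
        show p 2 + p 3 + (p 4 + p 0 / 2) + (p 5 + p 0 / 2) + (p 6 + p 1 / 2) + (p 7 + p 1 / 2) = 1
        linarith
      · rw [Fin.sum_univ_six, Fin.sum_univ_eight, Fin.sum_univ_eight]
        show ((p 0 * z + p 1 * -z + p 2 * 1 + p 3 * -1 + p 4 * z + p 5 * z + p 6 * -z + p 7 * -z : ℝ),
            (p 0 * 0 + p 1 * 0 + p 2 * 0 + p 3 * 0 + p 4 * r + p 5 * -r + p 6 * r + p 7 * -r : ℝ))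
          = p 2 • ((1 : ℝ), (0 : ℝ)) + p 3 • (-1, 0) + (p 4 + p 0 / 2) • (z, r)
            + (p 5 + p 0 / 2) • (z, -r) + (p 6 + p 1 / 2) • (-z, r) + (p 7 + p 1 / 2) • (-z, -r)
        simp [Prod.ext_iff, Prod.smul_mk, smul_eq_mul]
        constructor <;> ring
    · rw [Finset.sum_congr rfl fun i _ => by rw [chan_eq' z r i],
        sum_smul_qubit p (avec z) (bvec r) hp1]
  · rintro ⟨z', r', hm, rfl⟩
    rw [mem_hull_iff] at hm
    obtain ⟨q, hq0, hq1, hx⟩ := hm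
    refine ⟨![0, 0, q 0, q 1, q 2, q 3, q 4, q 5], ?_, ?_, ?_⟩
    · intro i
      fin_cases i
      exacts [le_rfl, le_rfl, hq0 0, hq0 1, hq0 2, hq0 3, hq0 4, hq0 5]
    · rw [Fin.sum_univ_eight]
      rw [Fin.sum_univ_six] at hq1
      show (0 : ℝ) + 0 + q 0 + q 1 + q 2 + q 3 + q 4 + q 5 = 1
      linarith
    · have hsum : ∑ i, (![0, 0, q 0, q 1, q 2, q 3, q 4, q 5] : Fin 8 → ℝ) i = 1 := by
        rw [Fin.sum_univ_eight]
        rw [Fin.sum_univ_six] at hq1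
        show (0 : ℝ) + 0 + q 0 + q 1 + q 2 + q 3 + q 4 + q 5 = 1
        linarith
      rw [Finset.sum_congr rfl fun i _ => by rw [chan_eq' z r i],
        sum_smul_qubit _ (avec z) (bvec r) hsum]
      rw [Fin.sum_univ_six] at hx
      have h1 : z' = q 0 * 1 + q 1 * -1 + q 2 * z + q 3 * z + q 4 * -z + q 5 * -z :=
        congrArg Prod.fst hx
      have h2 : r' = q 0 * 0 + q 1 * 0 + q 2 * r + q 3 * -r + q 4 * r + q 5 * -r :=
        congrArg Prod.snd hx
      have hz' : (∑ i, (![0, 0, q 0, q 1, q 2, q 3, q 4, q 5] : Fin 8 → ℝ) i * avec z i) = z' := by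
        rw [Fin.sum_univ_eight]
        show (0 : ℝ) * z + 0 * -z + q 0 * 1 + q 1 * -1 + q 2 * z + q 3 * z + q 4 * -z + q 5 * -z = z'
        rw [h1]; ring
      have hr' : (∑ i, (![0, 0, q 0, q 1, q 2, q 3, q 4, q 5] : Fin 8 → ℝ) i * bvec r i) = r' := by
        rw [Fin.sum_univ_eight]
        show (0 : ℝ) * 0 + 0 * 0 + q 0 * 0 + q 1 * 0 + q 2 * r + q 3 * -r + q 4 * r + q 5 * -r = r'
        rw [h2]; ring
      rw [hz', hr']
end

section
/- Let z, r be real numbers with z² + r² ≤ 1, and let (z', r') be any point in the convex hull of the six points (1,0), (−1,0), (z,r), (z,−r), (−z,r), (−z,−r) in the plane. Then r'²·(1 − z²) ≤ r²·(1 − z'²) and |r'| ≤ |r|. That is, the transformation region of ρ(z,r) under physically incoherent operations is contained in its transformation region under incoherent operations. -/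
/-- The PIO-transformation region is contained in the IO-transformation region:
any `(z',r')` in the convex hull of `(±1,0)`, `(z,±r)`, `(-z,±r)` satisfies
`r'²(1-z²) ≤ r²(1-z'²)` and `|r'| ≤ |r|`. -/
theorem pio_region_subset_io_region (z r z' r' : ℝ)
    (hzr : z ^ 2 + r ^ 2 ≤ 1)
    (hmem : (z', r') ∈ convexHull ℝ
      ({(1, 0), (-1, 0), (z, r), (z, -r), (-z, r), (-z, -r)} : Set (ℝ × ℝ))) :
    r' ^ 2 * (1 - z ^ 2) ≤ r ^ 2 * (1 - z' ^ 2) ∧ |r'| ≤ |r| := by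
  have h1z : (0 : ℝ) ≤ 1 - z ^ 2 := by nlinarith [sq_nonneg r]
  set C : Set (ℝ × ℝ) :=
    {p | r ^ 2 * p.1 ^ 2 + (1 - z ^ 2) * p.2 ^ 2 ≤ r ^ 2 ∧ |p.2| ≤ |r|} with hC
  have hconv : Convex ℝ C := by
    intro p hp q hq a b ha hb hab
    obtain ⟨hp1, hp2⟩ := hp
    obtain ⟨hq1, hq2⟩ := hq
    constructor
    · show r ^ 2 * (a • p + b • q).1 ^ 2 + (1 - z ^ 2) * (a • p + b • q).2 ^ 2 ≤ r ^ 2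
      simp only [Prod.fst_add, Prod.snd_add, Prod.smul_fst, Prod.smul_snd, smul_eq_mul]
      have e1 : (a * p.1 + b * q.1) ^ 2 ≤ a * p.1 ^ 2 + b * q.1 ^ 2 := by
        nlinarith [mul_nonneg (mul_nonneg ha hb) (sq_nonneg (p.1 - q.1))]
      have e2 : (a * p.2 + b * q.2) ^ 2 ≤ a * p.2 ^ 2 + b * q.2 ^ 2 := by
        nlinarith [mul_nonneg (mul_nonneg ha hb) (sq_nonneg (p.2 - q.2))]
      have f1 := mul_le_mul_of_nonneg_left e1 (sq_nonneg r)
      have f2 := mul_le_mul_of_nonneg_left e2 h1z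
      have g1 := mul_le_mul_of_nonneg_left hp1 ha
      have g2 := mul_le_mul_of_nonneg_left hq1 hb
      nlinarith [f1, f2, g1, g2]
    · show |(a • p + b • q).2| ≤ |r|
      simp only [Prod.snd_add, Prod.smul_snd, smul_eq_mul]
      calc |a * p.2 + b * q.2| ≤ |a * p.2| + |b * q.2| := abs_add_le _ _
        _ = a * |p.2| + b * |q.2| := by
            rw [abs_mul, abs_mul, abs_of_nonneg ha, abs_of_nonneg hb]
        _ ≤ a * |r| + b * |r| := by gcongr
        _ = |r| := by rw [← add_mul, hab, one_mul]
  have hsub : convexHull ℝ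
      ({(1, 0), (-1, 0), (z, r), (z, -r), (-z, r), (-z, -r)} : Set (ℝ × ℝ)) ⊆ C := by
    apply convexHull_min _ hconv
    intro p hp
    simp only [Set.mem_insert_iff, Set.mem_singleton_iff] at hp
    rcases hp with h | h | h | h | h | h <;> subst h <;>
      constructor <;> simp [hC, abs_neg] <;> nlinarith [sq_nonneg r, sq_nonneg z]
  obtain ⟨h1, h2⟩ := hsub hmem
  simp only [hC, Set.mem_setOf_eq] at h1 h2
  exact ⟨by nlinarith [h1], h2⟩
end

section
/- Let z, z' ∈ (−1, 1) be real numbers, and let (a_i)_{i∈I}, (b_i)_{i∈I}, (c_j)_{j∈J}, (d_j)_{j∈J} be finite families of nonnegative real numbers satisfying ∑_i a_i² + ∑_j c_j² = 1, ∑_i b_i² + ∑_j d_j² = 1, and ∑_i a_i²(1+z) + ∑_j d_j²(1−z) = 1 + z'. Then ∑_i a_i b_i + ∑_j c_j d_j ≤ √((1 − z'²)/(1 − z²)). -/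
/-- Two-dimensional Cauchy-Schwarz inequality. -/
lemma cs2dim (x y u v : ℝ) : (x * u + y * v) ^ 2 ≤ (x ^ 2 + y ^ 2) * (u ^ 2 + v ^ 2) := by
  nlinarith [sq_nonneg (x * v - y * u)]

lemma key2aux (s z z' : ℝ) (h : z' ^ 2 ≤ (z * s) ^ 2 + (1 - s ^ 2)) :
    s ^ 2 * (1 - z ^ 2) ≤ 1 - z' ^ 2 := by nlinarith [h]

/-- The key optimization bound in the proof of Theorem 2: under the normalization
and diagonal-output constraints, the off-diagonal multiplier
`∑ᵢ aᵢbᵢ + ∑ⱼ cⱼdⱼ` is at most `√((1-z'²)/(1-z²))`. -/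
theorem io_multiplier_bound (z z' : ℝ)
    (hz : z ∈ Set.Ioo (-1 : ℝ) 1) (hz' : z' ∈ Set.Ioo (-1 : ℝ) 1)
    (I J : Type) [Fintype I] [Fintype J]
    (a b : I → ℝ) (c d : J → ℝ)
    (ha : ∀ i, 0 ≤ a i) (hb : ∀ i, 0 ≤ b i)
    (hc : ∀ j, 0 ≤ c j) (hd : ∀ j, 0 ≤ d j)
    (h1 : ∑ i, (a i) ^ 2 + ∑ j, (c j) ^ 2 = 1)
    (h2 : ∑ i, (b i) ^ 2 + ∑ j, (d j) ^ 2 = 1)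
    (h3 : ∑ i, (a i) ^ 2 * (1 + z) + ∑ j, (d j) ^ 2 * (1 - z) = 1 + z') :
    ∑ i, a i * b i + ∑ j, c j * d j ≤ Real.sqrt ((1 - z' ^ 2) / (1 - z ^ 2)) := by
  obtain ⟨hz1, hz2⟩ := hz
  obtain ⟨hz'1, hz'2⟩ := hz'
  set A : ℝ := ∑ i, (a i) ^ 2 with hA
  set B : ℝ := ∑ i, (b i) ^ 2 with hB
  have hA0 : 0 ≤ A := Finset.sum_nonneg fun i _ => sq_nonneg _
  have hB0 : 0 ≤ B := Finset.sum_nonneg fun i _ => sq_nonneg _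
  have hC0 : (0:ℝ) ≤ ∑ j, (c j) ^ 2 := Finset.sum_nonneg fun j _ => sq_nonneg _
  have hD0 : (0:ℝ) ≤ ∑ j, (d j) ^ 2 := Finset.sum_nonneg fun j _ => sq_nonneg _
  have hCeq : ∑ j, (c j) ^ 2 = 1 - A := by linarith
  have hDeq : ∑ j, (d j) ^ 2 = 1 - B := by linarith
  have hA1 : A ≤ 1 := by linarith
  have hB1 : B ≤ 1 := by linarith
  have h3' : A * (1 + z) + (1 - B) * (1 - z) = 1 + z' := by
    rw [← Finset.sum_mul, ← Finset.sum_mul] at h3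
    rw [hDeq] at h3; exact h3
  have hz'eq : z' = (A - B) + z * (A + B - 1) := by linear_combination -h3'
  -- Cauchy-Schwarz on both sums
  have cs1 : ∑ i, a i * b i ≤ Real.sqrt A * Real.sqrt B :=
    Real.sum_mul_le_sqrt_mul_sqrt _ a b
  have cs2 : ∑ j, c j * d j ≤ Real.sqrt (1 - A) * Real.sqrt (1 - B) := by
    have := Real.sum_mul_le_sqrt_mul_sqrt Finset.univ c d
    rwa [hCeq, hDeq] at this
  set p : ℝ := Real.sqrt A * Real.sqrt B with hp
  set q : ℝ := Real.sqrt (1 - A) * Real.sqrt (1 - B) with hq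
  set r : ℝ := Real.sqrt A * Real.sqrt (1 - B) with hr
  set t : ℝ := Real.sqrt (1 - A) * Real.sqrt B with ht
  have hsqA : Real.sqrt A ^ 2 = A := Real.sq_sqrt hA0
  have hsqB : Real.sqrt B ^ 2 = B := Real.sq_sqrt hB0
  have hsqA' : Real.sqrt (1 - A) ^ 2 = 1 - A := Real.sq_sqrt (by linarith)
  have hsqB' : Real.sqrt (1 - B) ^ 2 = 1 - B := Real.sq_sqrt (by linarith)
  have hp2 : p ^ 2 = A * B := by rw [hp, mul_pow, hsqA, hsqB]
  have hq2 : q ^ 2 = (1 - A) * (1 - B) := by rw [hq, mul_pow, hsqA', hsqB']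
  have hr2 : r ^ 2 = A * (1 - B) := by rw [hr, mul_pow, hsqA, hsqB']
  have ht2 : t ^ 2 = (1 - A) * B := by rw [ht, mul_pow, hsqA', hsqB]
  have hpq : p * q = r * t := by rw [hp, hq, hr, ht]; ring
  have hp0 : 0 ≤ p := mul_nonneg (Real.sqrt_nonneg _) (Real.sqrt_nonneg _)
  have hq0 : 0 ≤ q := mul_nonneg (Real.sqrt_nonneg _) (Real.sqrt_nonneg _)
  -- key identities
  have id1 : (p + q) ^ 2 + (r - t) ^ 2 = 1 := by
    linear_combination hp2 + hq2 + hr2 + ht2 + 2 * hpq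
  have id2 : (p - q) ^ 2 + (r + t) ^ 2 = 1 := by
    linear_combination hp2 + hq2 + hr2 + ht2 - 2 * hpq
  -- z' as a dot product
  have hz'dot : z' = z * (p + q) * (p - q) + (r - t) * (r + t) := by
    linear_combination hz'eq - z * hp2 + z * hq2 - hr2 + ht2
  -- Cauchy-Schwarz in dimension 2
  have key : z' ^ 2 ≤ ((z * (p + q)) ^ 2 + (r - t) ^ 2) * ((p - q) ^ 2 + (r + t) ^ 2) := by
    rw [hz'dot]
    exact cs2dim (z * (p + q)) (r - t) (p - q) (r + t)
  rw [id2, mul_one] at key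
  have e1 : (r - t) ^ 2 = 1 - (p + q) ^ 2 := by linarith
  rw [e1] at key
  -- key : z'^2 ≤ (z*(p+q))^2 + (1 - (p+q)^2)
  have key2 : (p + q) ^ 2 * (1 - z ^ 2) ≤ 1 - z' ^ 2 := key2aux (p + q) z z' key
  have hz2pos : 0 < 1 - z ^ 2 := by
    have h := mul_pos (show (0:ℝ) < 1 - z by linarith) (show (0:ℝ) < 1 + z by linarith)
    have he : (1 - z) * (1 + z) = 1 - z ^ 2 := by ring
    linarith
  have hz'2nn : 0 ≤ 1 - z' ^ 2 := by
    have h := mul_pos (show (0:ℝ) < 1 - z' by linarith) (show (0:ℝ) < 1 + z' by linarith)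
    have he : (1 - z') * (1 + z') = 1 - z' ^ 2 := by ring
    linarith
  have hfin : p + q ≤ Real.sqrt ((1 - z' ^ 2) / (1 - z ^ 2)) := by
    rw [Real.le_sqrt (by linarith) (div_nonneg hz'2nn hz2pos.le), le_div_iff₀ hz2pos]
    linarith [key2]
  calc ∑ i, a i * b i + ∑ j, c j * d j ≤ p + q := add_le_add cs1 cs2
    _ ≤ _ := hfin
end

section
/- For all real numbers α, β ∈ [0,1] and z ∈ [−1, 1], setting z' = (α − β) + (α + β − 1)·z and λ = √(αβ) + √((1−α)(1−β)), one has z'² ≤ λ²·z² + 1 − λ². -/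
/-- For `α, β ∈ [0,1]` and `z ∈ [-1,1]`, the output diagonal parameter
`z' = (α - β) + (α + β - 1) z` of the special incoherent operation satisfies
`z'² ≤ λ² z² + 1 - λ²` where `λ = √(αβ) + √((1-α)(1-β))`. -/
theorem special_io_zprime_bound (α β z : ℝ)
    (hα : 0 ≤ α) (hα' : α ≤ 1) (hβ : 0 ≤ β) (hβ' : β ≤ 1)
    (hz : -1 ≤ z) (hz' : z ≤ 1) :
    ((α - β) + (α + β - 1) * z) ^ 2 ≤
      (Real.sqrt (α * β) + Real.sqrt ((1 - α) * (1 - β))) ^ 2 * z ^ 2 +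
        1 - (Real.sqrt (α * β) + Real.sqrt ((1 - α) * (1 - β))) ^ 2 := by
  set s := Real.sqrt (α * β) with hs_def
  set t := Real.sqrt ((1 - α) * (1 - β)) with ht_def
  set u := Real.sqrt (α * (1 - α)) with hu_def
  set v := Real.sqrt (β * (1 - β)) with hv_def
  have hs : s ^ 2 = α * β := Real.sq_sqrt (by nlinarith)
  have ht : t ^ 2 = (1 - α) * (1 - β) := Real.sq_sqrt (by nlinarith)
  have hu : u ^ 2 = α * (1 - α) := Real.sq_sqrt (by nlinarith)
  have hv : v ^ 2 = β * (1 - β) := Real.sq_sqrt (by nlinarith)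
  have hst : s * t = u * v := by
    rw [hs_def, ht_def, hu_def, hv_def, ← Real.sqrt_mul (by nlinarith),
      ← Real.sqrt_mul (by nlinarith)]
    ring_nf
  nlinarith [sq_nonneg ((u - v) + (u + v) * z), hs, ht, hu, hv, hst]
end
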